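/- In the setting where ℓ_1, ..., ℓ_n : ℝ^d → ℝ are convex, G-Lipschitz, L-smooth, μ, ν > 0, and Φ(w, λ) := Σ_{i=1}^n λ_i ℓ_i(w) + (μ/2)‖w‖₂² − (ν/2)‖λ − u_n‖₂² on ℝ^d × P(σ): the maps w*(λ) := argmin_{w ∈ ℝ^d} Φ(w, λ) and λ*(w) := argmax_{λ ∈ P(σ)} Φ(w, λ) are well-defined (unique), and satisfy ‖w*(λ₁) − w*(λ₂)‖₂ ≤ (√n·G/μ)‖λ₁ − λ₂‖₂ for all λ₁, λ₂ ∈ P(σ), and ‖λ*(w₁) − λ*(w₂)‖₂ ≤ (√n·G/ν)‖w₁ − w₂‖₂ for all w₁, w₂ ∈ ℝ^d. -/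

import Mathlib

open scoped NNReal

/-- The permutahedron generated by `σ`, as a subset of Euclidean space: the image of `σ`
under all doubly stochastic matrices. -/
def permutahedronE {n : ℕ} (σ : Fin n → ℝ) : Set (EuclideanSpace ℝ (Fin n)) :=
  {lam | ∃ P : Matrix (Fin n) (Fin n) ℝ,
    (∀ i j, P i j ∈ Set.Icc (0 : ℝ) 1) ∧ (∀ i, ∑ j, P i j = 1) ∧ (∀ j, ∑ i, P i j = 1) ∧
    ∀ i, lam i = ∑ j, P i j * σ j}

/-- The saddle function `Φ(w, λ) = ∑ᵢ λᵢ ℓᵢ(w) + (μ/2)‖w‖² − (ν/2)‖λ − 𝟏/n‖²`. -/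
noncomputable def Phi {d n : ℕ} (ℓ : Fin n → EuclideanSpace ℝ (Fin d) → ℝ) (μ ν : ℝ)
    (w : EuclideanSpace ℝ (Fin d)) (lam : EuclideanSpace ℝ (Fin n)) : ℝ :=
  (∑ i, lam i * ℓ i w) + μ / 2 * ‖w‖ ^ 2 - ν / 2 * ∑ i, (lam i - 1 / n) ^ 2

open Set Filter Topology Matrix

/-!
Since the `λᵢ` are nonnegative on the permutahedron, `Φ(·, λ)` is `μ`-strongly convex, and `Φ(w, ·)`
is `ν`-strongly concave; so extremizers are unique, and `Φ` grows at least quadratically away from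
them: `Φ(w*, λ) + μ/2 ‖w - w*‖² ≤ Φ(w, λ)`. Adding this inequality at `w₁ = w*(λ₁)` and
`w₂ = w*(λ₂)`, the quadratic terms in `λ` cancel and
`μ ‖w₁ - w₂‖² ≤ ∑ᵢ (λ₁ᵢ - λ₂ᵢ)(ℓᵢ w₂ - ℓᵢ w₁) ≤ √n G ‖λ₁ - λ₂‖ ‖w₁ - w₂‖` by Cauchy–Schwarz; the
argument for `λ*` is symmetric. A minimizer in `w` exists because the Lipschitz losses make
`Φ(·, λ)` coercive; a maximizer in `λ` because the permutahedron is the image of the compact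
Birkhoff polytope.
-/

section General

variable {E : Type*} [NormedAddCommGroup E]

lemma StrongConvexOn.add_sq_norm_sub_le_of_isMinOn [NormedSpace ℝ E] {s : Set E} {m : ℝ}
    {f : E → ℝ} {x y : E} (hf : StrongConvexOn s m f) (hmin : IsMinOn f s x) (hx : x ∈ s)
    (hy : y ∈ s) : f x + m / 2 * ‖y - x‖ ^ 2 ≤ f y := by
  -- strong convexity on the segment `[x, y]`, divided by `t`, then `t → 0⁺`
  have key : ∀ t ∈ Ioo (0 : ℝ) 1, (1 - t) * (m / 2 * ‖y - x‖ ^ 2) ≤ f y - f x := by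
    rintro t ⟨ht0, ht1⟩
    have hconv := hf.2 hx hy (sub_nonneg.2 ht1.le) ht0.le (sub_add_cancel 1 t)
    have hle :=
      isMinOn_iff.1 hmin _ (hf.1 hx hy (sub_nonneg.2 ht1.le) ht0.le (sub_add_cancel 1 t))
    rw [norm_sub_rev] at hconv
    simp only [smul_eq_mul] at hconv
    refine le_of_mul_le_mul_left ?_ ht0
    nlinarith
  have hlim : Tendsto (fun t : ℝ => (1 - t) * (m / 2 * ‖y - x‖ ^ 2)) (𝓝[>] 0)
      (𝓝 (m / 2 * ‖y - x‖ ^ 2)) :=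
    ((Continuous.tendsto' (by fun_prop) 0 _ (by simp))).mono_left nhdsWithin_le_nhds
  linarith [le_of_tendsto hlim (eventually_of_mem (Ioo_mem_nhdsGT one_pos) key)]

lemma StrongConcaveOn.add_sq_norm_sub_le_of_isMaxOn [NormedSpace ℝ E] {s : Set E} {m : ℝ}
    {f : E → ℝ} {x y : E} (hf : StrongConcaveOn s m f) (hmax : IsMaxOn f s x) (hx : x ∈ s)
    (hy : y ∈ s) : f y + m / 2 * ‖y - x‖ ^ 2 ≤ f x := by
  have := StrongConvexOn.add_sq_norm_sub_le_of_isMinOn (f := -f) hf.neg hmax.neg hx hy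
  simp only [Pi.neg_apply] at this
  linarith

lemma exists_isMinOn_of_quadratic_lower_bound [ProperSpace E] {f : E → ℝ} (hf : Continuous f)
    {a K m : ℝ} (hm : 0 < m) (hbound : ∀ y, a - K * ‖y‖ + m * ‖y‖ ^ 2 ≤ f y) :
    ∃ x, IsMinOn f univ x := by
  have hquad : Tendsto (fun r : ℝ => a - K * r + m * r ^ 2) atTop atTop := by
    have : Tendsto (fun r : ℝ => r * (m * r - K)) atTop atTop :=
      tendsto_id.atTop_mul_atTop₀
        (tendsto_atTop_add_const_right _ _ (tendsto_id.const_mul_atTop hm))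
    refine tendsto_atTop_add_const_left _ a this |>.congr fun r => ?_
    ring
  obtain ⟨x, hx⟩ :=
    hf.exists_forall_le (tendsto_atTop_mono hbound (hquad.comp tendsto_norm_cocompact_atTop))
  exact ⟨x, isMinOn_univ_iff.2 hx⟩

end General

lemma le_div_of_mul_sq_le_mul {a b μ : ℝ} (hμ : 0 < μ) (hb : 0 ≤ b)
    (h : μ * a ^ 2 ≤ b * a) : a ≤ b / μ := by
  rw [le_div_iff₀ hμ]
  nlinarith

lemma sum_mul_le_sqrt_card_mul_norm_mul {ι : Type*} [Fintype ι] (a : EuclideanSpace ℝ ι)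
    {b : ι → ℝ} {C : ℝ} (hC : 0 ≤ C) (hb : ∀ i, |b i| ≤ C) :
    ∑ i, a i * b i ≤ √(Fintype.card ι) * ‖a‖ * C := by
  have hbsq : ∑ i, b i ^ 2 ≤ Fintype.card ι * C ^ 2 := by
    calc ∑ i, b i ^ 2 = ∑ i, |b i| ^ 2 := by simp only [sq_abs]
      _ ≤ ∑ _i : ι, C ^ 2 := Finset.sum_le_sum fun i _ => pow_le_pow_left₀ (abs_nonneg _) (hb i) 2
      _ = Fintype.card ι * C ^ 2 := by simp
  calc ∑ i, a i * b i ≤ √(∑ i, a i ^ 2) * √(∑ i, b i ^ 2) :=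
        Real.sum_mul_le_sqrt_mul_sqrt _ _ _
    _ ≤ ‖a‖ * (√(Fintype.card ι) * C) := by
        rw [← EuclideanSpace.real_norm_sq_eq, Real.sqrt_sq (norm_nonneg a),
          ← Real.sqrt_sq hC, ← Real.sqrt_mul (Nat.cast_nonneg _)]
        gcongr
    _ = √(Fintype.card ι) * ‖a‖ * C := by ring

lemma concaveOn_sum_mul_add {ι : Type*} [Fintype ι] {s : Set (EuclideanSpace ℝ ι)}
    (hs : Convex ℝ s) (c : ι → ℝ) (K : ℝ) :
    ConcaveOn ℝ s fun x => ∑ i, x i * c i + K := by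
  refine (((∑ i, c i • EuclideanSpace.proj i : EuclideanSpace ℝ ι →L[ℝ] ℝ).toLinearMap.concaveOn
    hs).add_const K).congr fun x _ => ?_
  simp [mul_comm]

section Permutahedron

variable {n : ℕ} {σ : Fin n → ℝ}

lemma permutahedronE_eq_image (σ : Fin n → ℝ) :
    permutahedronE σ =
      (fun P : Matrix (Fin n) (Fin n) ℝ => WithLp.toLp 2 (P *ᵥ σ)) ''
        doublyStochastic ℝ (Fin n) := by
  ext lam
  constructor
  · rintro ⟨P, hP01, hrow, hcol, hlam⟩
    refine ⟨P, mem_doublyStochastic_iff_sum.2 ⟨fun i j => (hP01 i j).1, hrow, hcol⟩, ?_⟩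
    ext i
    simp [hlam, Matrix.mulVec, dotProduct]
  · rintro ⟨P, hP, rfl⟩
    refine ⟨P, fun i j => ⟨nonneg_of_mem_doublyStochastic hP, le_one_of_mem_doublyStochastic hP⟩,
      sum_row_of_mem_doublyStochastic hP, sum_col_of_mem_doublyStochastic hP, fun i => rfl⟩

lemma nonneg_of_mem_permutahedronE (hσ : ∀ i, 0 ≤ σ i) {lam : EuclideanSpace ℝ (Fin n)}
    (hlam : lam ∈ permutahedronE σ) (i : Fin n) : 0 ≤ lam i := by
  obtain ⟨P, hP, -, -, hlam⟩ := hlam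
  rw [hlam i]
  exact Finset.sum_nonneg fun j _ => mul_nonneg (hP i j).1 (hσ j)

lemma convex_permutahedronE (σ : Fin n → ℝ) : Convex ℝ (permutahedronE σ) := by
  rw [permutahedronE_eq_image]
  refine convex_doublyStochastic.is_linear_image ⟨fun P Q => ?_, fun c P => ?_⟩ <;> ext i <;>
    simp [Matrix.add_mulVec, Matrix.smul_mulVec]

lemma isCompact_permutahedronE (σ : Fin n → ℝ) : IsCompact (permutahedronE σ) := by
  rw [permutahedronE_eq_image, doublyStochastic_eq_convexHull_permMatrix]
  refine ((Set.finite_range _).isCompact_convexHull (𝕜 := ℝ)).image ?_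
  fun_prop

lemma permutahedronE_nonempty (σ : Fin n → ℝ) : (permutahedronE σ).Nonempty := by
  rw [permutahedronE_eq_image]
  exact ⟨_, ⟨1, (doublyStochastic ℝ (Fin n)).one_mem, rfl⟩⟩

end Permutahedron

section Phi

variable {d n : ℕ} {ℓ : Fin n → EuclideanSpace ℝ (Fin d) → ℝ} {μ ν : ℝ} {G : ℝ≥0}

lemma strongConvexOn_Phi_left (hconv : ∀ i, ConvexOn ℝ univ (ℓ i))
    {lam : EuclideanSpace ℝ (Fin n)} (hlam : ∀ i, 0 ≤ lam i) :
    StrongConvexOn univ μ fun w => Phi ℓ μ ν w lam := by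
  rw [strongConvexOn_iff_convex]
  have hsum : ConvexOn ℝ univ (∑ i, lam i • ℓ i) :=
    Finset.sum_induction _ (ConvexOn ℝ univ) (fun _ _ => ConvexOn.add)
      (convexOn_const 0 convex_univ) fun i _ => (hconv i).smul (hlam i)
  refine (hsum.sub (concaveOn_const (ν / 2 * ∑ i, (lam i - 1 / n) ^ 2) convex_univ)).congr
    fun w _ => ?_
  simp only [one_div, Pi.sub_apply, Finset.sum_apply, Pi.smul_apply, smul_eq_mul, Phi]
  ring

lemma Phi_add_sq_norm_eq (w : EuclideanSpace ℝ (Fin d)) (lam : EuclideanSpace ℝ (Fin n)) :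
    Phi ℓ μ ν w lam + ν / 2 * ‖lam‖ ^ 2 = ∑ i, lam i * (ℓ i w + ν / n) +
      (μ / 2 * ‖w‖ ^ 2 - ν / 2 * ∑ _i : Fin n, (1 / n : ℝ) ^ 2) := by
  rw [Phi, EuclideanSpace.real_norm_sq_eq lam]
  have hexpand : ∑ i, (lam i - 1 / n) ^ 2 =
      ∑ i, lam i ^ 2 - 2 / n * ∑ i, lam i + ∑ _i : Fin n, (1 / n : ℝ) ^ 2 := by
    rw [Finset.mul_sum, ← Finset.sum_sub_distrib, ← Finset.sum_add_distrib]
    exact Finset.sum_congr rfl fun i _ => by ring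
  rw [hexpand]
  simp only [mul_add, Finset.sum_add_distrib, ← Finset.sum_mul]
  ring

lemma strongConcaveOn_Phi_right {s : Set (EuclideanSpace ℝ (Fin n))} (hs : Convex ℝ s)
    (w : EuclideanSpace ℝ (Fin d)) : StrongConcaveOn s ν (Phi ℓ μ ν w) := by
  rw [strongConcaveOn_iff_convex]
  exact (concaveOn_sum_mul_add hs _ _).congr fun lam _ => (Phi_add_sq_norm_eq w lam).symm

lemma continuous_Phi_left (hlip : ∀ i, LipschitzWith G (ℓ i))
    (lam : EuclideanSpace ℝ (Fin n)) : Continuous fun w => Phi ℓ μ ν w lam := by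
  have := fun i => (hlip i).continuous
  unfold Phi
  fun_prop

lemma continuous_Phi_right (w : EuclideanSpace ℝ (Fin d)) : Continuous (Phi ℓ μ ν w) := by
  unfold Phi
  fun_prop

lemma Phi_lower_bound (hlip : ∀ i, LipschitzWith G (ℓ i))
    {lam : EuclideanSpace ℝ (Fin n)} (hlam : ∀ i, 0 ≤ lam i) (w : EuclideanSpace ℝ (Fin d)) :
    Phi ℓ μ ν 0 lam - (∑ i, lam i) * G * ‖w‖ + μ / 2 * ‖w‖ ^ 2 ≤ Phi ℓ μ ν w lam := by
  have hterm : ∀ i, lam i * ℓ i 0 - lam i * G * ‖w‖ ≤ lam i * ℓ i w := fun i => by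
    have := (hlip i).dist_le_mul w 0
    rw [Real.dist_eq, dist_zero_right, abs_sub_comm] at this
    nlinarith [hlam i, (abs_le.1 this).2]
  have := Finset.sum_le_sum fun i (_ : i ∈ Finset.univ) => hterm i
  rw [Finset.sum_sub_distrib, ← Finset.sum_mul, ← Finset.sum_mul] at this
  simp only [Phi, norm_zero]
  linarith

lemma Phi_cross_le (hlip : ∀ i, LipschitzWith G (ℓ i))
    (w₁ w₂ : EuclideanSpace ℝ (Fin d)) (lam₁ lam₂ : EuclideanSpace ℝ (Fin n)) :
    Phi ℓ μ ν w₂ lam₁ + Phi ℓ μ ν w₁ lam₂ - Phi ℓ μ ν w₁ lam₁ - Phi ℓ μ ν w₂ lam₂ ≤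
      √n * G * ‖lam₁ - lam₂‖ * ‖w₁ - w₂‖ := by
  have hcross : Phi ℓ μ ν w₂ lam₁ + Phi ℓ μ ν w₁ lam₂ - Phi ℓ μ ν w₁ lam₁ - Phi ℓ μ ν w₂ lam₂ =
      ∑ i, (lam₁ - lam₂) i * (ℓ i w₂ - ℓ i w₁) := by
    simp only [Phi, PiLp.sub_apply, sub_mul, mul_sub, Finset.sum_sub_distrib]
    ring
  have hdiff : ∀ i, |ℓ i w₂ - ℓ i w₁| ≤ G * ‖w₁ - w₂‖ := fun i => by
    simpa [Real.dist_eq, dist_eq_norm, norm_sub_rev w₂] using (hlip i).dist_le_mul w₂ w₁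
  rw [hcross]
  convert sum_mul_le_sqrt_card_mul_norm_mul (lam₁ - lam₂) (by positivity) hdiff using 1
  simp only [Fintype.card_fin]
  ring


lemma exists_isMinOn_Phi_left (hlip : ∀ i, LipschitzWith G (ℓ i)) (hμ : 0 < μ)
    {lam : EuclideanSpace ℝ (Fin n)} (hlam : ∀ i, 0 ≤ lam i) :
    ∃ w, IsMinOn (fun w' => Phi ℓ μ ν w' lam) univ w :=
  exists_isMinOn_of_quadratic_lower_bound (continuous_Phi_left hlip lam) (half_pos hμ)
    (Phi_lower_bound hlip hlam)

lemma norm_sub_le_of_isMinOn_Phi_left (hconv : ∀ i, ConvexOn ℝ univ (ℓ i))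
    (hlip : ∀ i, LipschitzWith G (ℓ i)) (hμ : 0 < μ) {lam₁ lam₂ : EuclideanSpace ℝ (Fin n)}
    (hlam₁ : ∀ i, 0 ≤ lam₁ i) (hlam₂ : ∀ i, 0 ≤ lam₂ i) {w₁ w₂ : EuclideanSpace ℝ (Fin d)}
    (h₁ : IsMinOn (fun w => Phi ℓ μ ν w lam₁) univ w₁)
    (h₂ : IsMinOn (fun w => Phi ℓ μ ν w lam₂) univ w₂) :
    ‖w₁ - w₂‖ ≤ √n * G / μ * ‖lam₁ - lam₂‖ := by
  have g₁ := (strongConvexOn_Phi_left hconv hlam₁).add_sq_norm_sub_le_of_isMinOn h₁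
    (mem_univ _) (mem_univ w₂)
  have g₂ := (strongConvexOn_Phi_left hconv hlam₂).add_sq_norm_sub_le_of_isMinOn h₂
    (mem_univ _) (mem_univ w₁)
  have hcross := Phi_cross_le (μ := μ) (ν := ν) hlip w₁ w₂ lam₁ lam₂
  rw [norm_sub_rev w₂] at g₁
  rw [div_mul_eq_mul_div]
  refine le_div_of_mul_sq_le_mul hμ (by positivity) ?_
  linarith

lemma norm_sub_le_of_isMaxOn_Phi_right (hlip : ∀ i, LipschitzWith G (ℓ i)) (hν : 0 < ν)
    {s : Set (EuclideanSpace ℝ (Fin n))} (hs : Convex ℝ s) {w₁ w₂ : EuclideanSpace ℝ (Fin d)}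
    {lam₁ lam₂ : EuclideanSpace ℝ (Fin n)} (hlam₁ : lam₁ ∈ s) (hlam₂ : lam₂ ∈ s)
    (h₁ : IsMaxOn (Phi ℓ μ ν w₁) s lam₁) (h₂ : IsMaxOn (Phi ℓ μ ν w₂) s lam₂) :
    ‖lam₁ - lam₂‖ ≤ √n * G / ν * ‖w₁ - w₂‖ := by
  have g₁ := (strongConcaveOn_Phi_right hs w₁).add_sq_norm_sub_le_of_isMaxOn h₁ hlam₁ hlam₂
  have g₂ := (strongConcaveOn_Phi_right hs w₂).add_sq_norm_sub_le_of_isMaxOn h₂ hlam₂ hlam₁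
  have hcross := Phi_cross_le (μ := μ) (ν := ν) hlip w₂ w₁ lam₁ lam₂
  rw [norm_sub_rev lam₂] at g₁
  rw [norm_sub_rev w₂] at hcross
  rw [div_mul_eq_mul_div]
  refine le_div_of_mul_sq_le_mul hν (by positivity) ?_
  linarith

end Phi

theorem stmt18_general {d n : ℕ}
    (ℓ : Fin n → EuclideanSpace ℝ (Fin d) → ℝ)
    (hconv : ∀ i, ConvexOn ℝ Set.univ (ℓ i))
    (G : ℝ≥0) (hlip : ∀ i, LipschitzWith G (ℓ i))
    (μ ν : ℝ) (hμ : 0 < μ) (hν : 0 < ν)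
    (σ : Fin n → ℝ) (hσ_nonneg : ∀ i, 0 ≤ σ i) :
    (∀ lam ∈ permutahedronE σ,
      ∃! w : EuclideanSpace ℝ (Fin d), IsMinOn (fun w' => Phi ℓ μ ν w' lam) Set.univ w) ∧
    (∀ w : EuclideanSpace ℝ (Fin d),
      ∃! lam, lam ∈ permutahedronE σ ∧
        IsMaxOn (fun lam' => Phi ℓ μ ν w lam') (permutahedronE σ) lam) ∧
    (∀ lam₁ ∈ permutahedronE σ, ∀ lam₂ ∈ permutahedronE σ,
      ∀ w₁ w₂ : EuclideanSpace ℝ (Fin d),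
        IsMinOn (fun w' => Phi ℓ μ ν w' lam₁) Set.univ w₁ →
        IsMinOn (fun w' => Phi ℓ μ ν w' lam₂) Set.univ w₂ →
        ‖w₁ - w₂‖ ≤ Real.sqrt n * (G : ℝ) / μ * ‖lam₁ - lam₂‖) ∧
    (∀ w₁ w₂ : EuclideanSpace ℝ (Fin d), ∀ lam₁ lam₂ : EuclideanSpace ℝ (Fin n),
      lam₁ ∈ permutahedronE σ →
      IsMaxOn (fun lam' => Phi ℓ μ ν w₁ lam') (permutahedronE σ) lam₁ →
      lam₂ ∈ permutahedronE σ →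
      IsMaxOn (fun lam' => Phi ℓ μ ν w₂ lam') (permutahedronE σ) lam₂ →
      ‖lam₁ - lam₂‖ ≤ Real.sqrt n * (G : ℝ) / ν * ‖w₁ - w₂‖) := by
  have hnonneg : ∀ {lam}, lam ∈ permutahedronE σ → ∀ i, 0 ≤ lam i :=
    nonneg_of_mem_permutahedronE hσ_nonneg
  refine ⟨fun lam hlam => ?_, fun w => ?_,
    fun _ h₁ _ h₂ _ _ =>
      norm_sub_le_of_isMinOn_Phi_left hconv hlip hμ (hnonneg h₁) (hnonneg h₂),
    fun _ _ _ _ h₁ hmax₁ h₂ hmax₂ =>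
      norm_sub_le_of_isMaxOn_Phi_right hlip hν (convex_permutahedronE σ) h₁ h₂ hmax₁ hmax₂⟩
  · obtain ⟨w, hw⟩ := exists_isMinOn_Phi_left (ν := ν) hlip hμ (hnonneg hlam)
    exact ⟨w, hw, fun w' hw' => ((strongConvexOn_Phi_left hconv (hnonneg hlam)).strictConvexOn
      hμ).eq_of_isMinOn hw' hw (mem_univ _) (mem_univ _)⟩
  · obtain ⟨lam, hlam, hmax⟩ := (isCompact_permutahedronE σ).exists_isMaxOn
      (permutahedronE_nonempty σ) (continuous_Phi_right w).continuousOn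
    exact ⟨lam, ⟨hlam, hmax⟩, fun lam' ⟨hlam', hmax'⟩ =>
      ((strongConcaveOn_Phi_right (convex_permutahedronE σ) w).strictConcaveOn hν).eq_of_isMaxOn
        hmax' hmax hlam' hlam⟩

/-- For convex, `G`-Lipschitz, `L`-smooth losses and `μ, ν > 0`, the maps
`w*(λ) = argmin_w Φ(w, λ)` and `λ*(w) = argmax_{λ ∈ P(σ)} Φ(w, λ)` are well-defined (unique)
and are respectively `(√n G/μ)`- and `(√n G/ν)`-Lipschitz. -/
theorem stmt18 {d n : ℕ}
    (ℓ : Fin n → EuclideanSpace ℝ (Fin d) → ℝ)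
    (hconv : ∀ i, ConvexOn ℝ Set.univ (ℓ i))
    (G : ℝ≥0) (hlip : ∀ i, LipschitzWith G (ℓ i))
    (gradℓ : Fin n → EuclideanSpace ℝ (Fin d) → EuclideanSpace ℝ (Fin d))
    (hgrad : ∀ i w, HasGradientAt (ℓ i) (gradℓ i w) w)
    (L : ℝ≥0) (hsmooth : ∀ i, LipschitzWith L (gradℓ i))
    (μ ν : ℝ) (hμ : 0 < μ) (hν : 0 < ν)
    (σ : Fin n → ℝ) (hσ_nonneg : ∀ i, 0 ≤ σ i) (hσ_sum : ∑ i, σ i = 1) :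
    (∀ lam ∈ permutahedronE σ,
      ∃! w : EuclideanSpace ℝ (Fin d), IsMinOn (fun w' => Phi ℓ μ ν w' lam) Set.univ w) ∧
    (∀ w : EuclideanSpace ℝ (Fin d),
      ∃! lam, lam ∈ permutahedronE σ ∧
        IsMaxOn (fun lam' => Phi ℓ μ ν w lam') (permutahedronE σ) lam) ∧
    (∀ lam₁ ∈ permutahedronE σ, ∀ lam₂ ∈ permutahedronE σ,
      ∀ w₁ w₂ : EuclideanSpace ℝ (Fin d),
        IsMinOn (fun w' => Phi ℓ μ ν w' lam₁) Set.univ w₁ →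
        IsMinOn (fun w' => Phi ℓ μ ν w' lam₂) Set.univ w₂ →
        ‖w₁ - w₂‖ ≤ Real.sqrt n * (G : ℝ) / μ * ‖lam₁ - lam₂‖) ∧
    (∀ w₁ w₂ : EuclideanSpace ℝ (Fin d), ∀ lam₁ lam₂ : EuclideanSpace ℝ (Fin n),
      lam₁ ∈ permutahedronE σ →
      IsMaxOn (fun lam' => Phi ℓ μ ν w₁ lam') (permutahedronE σ) lam₁ →
      lam₂ ∈ permutahedronE σ →
      IsMaxOn (fun lam' => Phi ℓ μ ν w₂ lam') (permutahedronE σ) lam₂ →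
      ‖lam₁ - lam₂‖ ≤ Real.sqrt n * (G : ℝ) / ν * ‖w₁ - w₂‖) :=
  stmt18_general ℓ hconv G hlip μ ν hμ hν σ hσ_nonneg
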